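/- arXiv:1712.08729 — 3 statements merged into one kernel-verified Lean document; each statement's English description precedes it below -/
import Mathlib

section
/- Over a field of characteristic not 2, if the pair (B - λA, A) is congruent to K_n = ( [[0,J_n(0)],[-J_n(0)ᵀ,0]], [[0,I_n],[-I_n,0]] ), then (A,B) is congruent to J_n(λ)-pair = ( [[0,I_n],[-I_n,0]], [[0,J_n(λ)],[-J_n(λ)ᵀ,0]] ). -/
open Matrix

/-- The `n × n` lower Jordan block with `lam` on the diagonal and `1` on the subdiagonal. -/
def jordanBlock {F : Type*} [Field F] (n : ℕ) (lam : F) : Matrix (Fin n) (Fin n) F :=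
  Matrix.of fun i j => if i = j then lam else if (i : ℕ) = (j : ℕ) + 1 then 1 else 0

lemma jordanBlock_eq {F : Type*} [Field F] (n : ℕ) (lam : F) :
    jordanBlock n lam = jordanBlock n 0 + lam • (1 : Matrix (Fin n) (Fin n) F) := by
  ext i j
  simp only [jordanBlock, Matrix.of_apply, Matrix.add_apply, Matrix.smul_apply,
    Matrix.one_apply, smul_eq_mul]
  by_cases hij : i = j
  · simp [hij, Fin.val_eq_val]
  · have : ¬ (i : ℕ) = (j : ℕ) := fun h => hij (Fin.ext h)
    simp [hij]

theorem congruent_to_Kn_implies_congruent_to_Jn {F : Type*} [Field F]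
    (hchar : (2 : F) ≠ 0) {n : ℕ} (lam : F)
    (A B : Matrix (Fin n ⊕ Fin n) (Fin n ⊕ Fin n) F)
    (h : ∃ S, IsUnit S ∧
      S * (B - lam • A) * Sᵀ = fromBlocks 0 (jordanBlock n 0) (-(jordanBlock n 0)ᵀ) 0 ∧
      S * A * Sᵀ = fromBlocks 0 1 (-1) 0) :
    ∃ S : Matrix (Fin n ⊕ Fin n) (Fin n ⊕ Fin n) F, IsUnit S ∧
      S * A * Sᵀ = fromBlocks 0 1 (-1) 0 ∧
      S * B * Sᵀ = fromBlocks 0 (jordanBlock n lam) (-(jordanBlock n lam)ᵀ) 0 := by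
  obtain ⟨S, hS, h1, h2⟩ := h
  refine ⟨S, hS, h2, ?_⟩
  have key : S * B * Sᵀ = S * (B - lam • A) * Sᵀ + lam • (S * A * Sᵀ) := by
    simp [Matrix.mul_sub, Matrix.sub_mul, Matrix.mul_smul, Matrix.smul_mul]
  rw [key, h1, h2, jordanBlock_eq n lam]
  simp [ Matrix.fromBlocks_smul, Matrix.fromBlocks_add, Matrix.transpose_add,
    Matrix.transpose_smul, Matrix.transpose_one, neg_add, smul_neg, add_comm]
end

section
/- The pair K_n = ( [[0,J_n(0)],[-J_n(0)ᵀ,0]], [[0,I_n],[-I_n,0]] ) is equivalent to the direct sum (J_n(0), I_n) ⊕ (J_n(0)ᵀ, I_n). -/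
open Matrix

namespace Matrix

variable {R : Type*} [Ring R] {m n p q : Type*} [Fintype m] [Fintype n] [Fintype p] [Fintype q]
  [DecidableEq m] [DecidableEq n] [DecidableEq p] [DecidableEq q]

theorem fromBlocks_one_zero_zero_neg_one_mul_self :
    fromBlocks (1 : Matrix m m R) 0 0 (-1 : Matrix p p R) * fromBlocks 1 0 0 (-1) = 1 := by
  simp [fromBlocks_multiply, ← fromBlocks_one]

theorem fromBlocks_zero_one_one_zero_mul_self :
    fromBlocks (0 : Matrix n m R) (1 : Matrix n n R) (1 : Matrix m m R) 0 *
      fromBlocks (0 : Matrix m n R) (1 : Matrix m m R) (1 : Matrix n n R) 0 = 1 := by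
  simp [fromBlocks_multiply, ← fromBlocks_one]

theorem fromBlocks_one_zero_zero_neg_one_mul_fromBlocks_zero_neg_mul_fromBlocks_zero_one_one_zero
    (A : Matrix m n R) (B : Matrix p q R) :
    fromBlocks (1 : Matrix m m R) 0 0 (-1 : Matrix p p R) * fromBlocks 0 A (-B) 0 *
        fromBlocks (0 : Matrix q n R) (1 : Matrix q q R) (1 : Matrix n n R) 0 =
      fromBlocks A 0 0 B := by
  simp [fromBlocks_multiply]

end Matrix

theorem Kn_pair_equivalent_to_directSum {F : Type*} [Field F] {n : ℕ} :
    ∃ R S : Matrix (Fin n ⊕ Fin n) (Fin n ⊕ Fin n) F, IsUnit R ∧ IsUnit S ∧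
      R * (fromBlocks 0 (jordanBlock n 0) (-(jordanBlock n 0)ᵀ) 0) * S =
        fromBlocks (jordanBlock n 0) 0 0 (jordanBlock n 0)ᵀ ∧
      R * (fromBlocks 0 1 (-1) 0) * S = 1 :=
  ⟨fromBlocks 1 0 0 (-1), fromBlocks 0 1 1 0,
    IsUnit.of_mul_eq_one _ fromBlocks_one_zero_zero_neg_one_mul_self,
    IsUnit.of_mul_eq_one _ fromBlocks_zero_one_one_zero_mul_self,
    fromBlocks_one_zero_zero_neg_one_mul_fromBlocks_zero_neg_mul_fromBlocks_zero_one_one_zero _ _,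
    (fromBlocks_one_zero_zero_neg_one_mul_fromBlocks_zero_neg_mul_fromBlocks_zero_one_one_zero 1 1).trans
      fromBlocks_one⟩
end

section
/- The pair L_n = ( [[0,L_n],[-L_nᵀ,0]], [[0,R_n],[-R_nᵀ,0]] ) of (2n-1)×(2n-1) matrices is equivalent to the direct sum (L_n, R_n) ⊕ (L_nᵀ, R_nᵀ). -/
open Matrix

/-- The `(n-1) × n` matrix `[I | 0]`. -/
def Lmat {F : Type*} [Field F] (n : ℕ) : Matrix (Fin (n - 1)) (Fin n) F :=
  Matrix.of fun i j => if (i : ℕ) = (j : ℕ) then 1 else 0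

/-- The `(n-1) × n` matrix `[0 | I]`. -/
def Rmat {F : Type*} [Field F] (n : ℕ) : Matrix (Fin (n - 1)) (Fin n) F :=
  Matrix.of fun i j => if (i : ℕ) + 1 = (j : ℕ) then 1 else 0

/-! Negating the second block row turns `[[0, A], [-Aᵀ, 0]]` into `[[0, A], [Aᵀ, 0]]`, which is
`A ⊕ Aᵀ` with its two block columns swapped. The row operation is the same for every `A`, so it
serves both members of the pair at once, with the identity as column operation. -/

namespace Matrix

variable {m n α : Type*}

theorem fromBlocks_submatrix_sumComm [Zero α] (A : Matrix m n α) (B : Matrix n m α) :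
    (fromBlocks A 0 0 B).submatrix id (Equiv.sumComm m n) = fromBlocks 0 A B 0 :=
  fromBlocks_submatrix_sum_swap_right A 0 0 B id

variable [Fintype m] [Fintype n] [DecidableEq m] [DecidableEq n] [Ring α]

theorem fromBlocks_one_neg_one_mul_self :
    fromBlocks (1 : Matrix m m α) 0 0 (-1 : Matrix n n α) * fromBlocks 1 0 0 (-1) = 1 := by
  rw [fromBlocks_multiply, ← fromBlocks_one]
  simp

theorem isUnit_fromBlocks_one_neg_one :
    IsUnit (fromBlocks (1 : Matrix m m α) 0 0 (-1 : Matrix n n α)) :=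
  ⟨⟨_, _, fromBlocks_one_neg_one_mul_self, fromBlocks_one_neg_one_mul_self⟩, rfl⟩

theorem fromBlocks_one_neg_one_mul_fromBlocks_zero (A : Matrix m n α) (B : Matrix n m α) :
    fromBlocks (1 : Matrix m m α) 0 0 (-1 : Matrix n n α) * fromBlocks 0 A (-B) 0 =
      fromBlocks 0 A B 0 := by
  simp [fromBlocks_multiply]

theorem fromBlocks_one_neg_one_mul_skew_mul_one (A : Matrix m n α) :
    fromBlocks (1 : Matrix m m α) 0 0 (-1 : Matrix n n α) * fromBlocks 0 A (-Aᵀ) 0 * 1 =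
      (fromBlocks A 0 0 Aᵀ).submatrix id (Equiv.sumComm m n) := by
  rw [mul_one, fromBlocks_one_neg_one_mul_fromBlocks_zero, fromBlocks_submatrix_sumComm]

end Matrix

/-- The pair `L_n` is equivalent to `(L_n, R_n) ⊕ (L_nᵀ, R_nᵀ)`; the direct sum
`L_n ⊕ L_nᵀ` (with rows indexed by `Fin (n-1) ⊕ Fin n` and columns by
`Fin n ⊕ Fin (n-1)`) is pulled back to column index `Fin (n-1) ⊕ Fin n`
by the canonical swap equivalence. -/
theorem Ln_pair_equivalent_to_directSum {F : Type*} [Field F] {n : ℕ} :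
    ∃ (R S : Matrix (Fin (n - 1) ⊕ Fin n) (Fin (n - 1) ⊕ Fin n) F),
      IsUnit R ∧ IsUnit S ∧
      R * (fromBlocks 0 (Lmat n) (-(Lmat n)ᵀ) 0) * S =
        (fromBlocks (Lmat n) 0 0 (Lmat n)ᵀ).submatrix id
          (Equiv.sumComm (Fin (n - 1)) (Fin n)) ∧
      R * (fromBlocks 0 (Rmat n) (-(Rmat n)ᵀ) 0) * S =
        (fromBlocks (Rmat n) 0 0 (Rmat n)ᵀ).submatrix id
          (Equiv.sumComm (Fin (n - 1)) (Fin n)) :=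
  ⟨fromBlocks 1 0 0 (-1), 1, isUnit_fromBlocks_one_neg_one, isUnit_one,
    fromBlocks_one_neg_one_mul_skew_mul_one _, fromBlocks_one_neg_one_mul_skew_mul_one _⟩
end
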